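/- Let A be an integral domain which is the intersection of finitely many valuation rings of its quotient field F. If A is local, then A is a valuation ring of F. -/

import Mathlib

open Set

/-- A subring `V` of a field `F` is a valuation ring of `F` (with quotient field `F`). -/
def IsValSubring (F : Type*) [Field F] (V : Subring F) : Prop :=
  ∀ t : F, t ≠ 0 → t ∈ V ∨ t⁻¹ ∈ V

/-- The Zariski-Riemann space of the field `F`: the set of valuation rings of `F`. -/
def Zar (F : Type*) [Field F] : Type _ := {V : Subring F // IsValSubring F V}

/-- The patch (constructible) topology on `Zar F`, generated by the sets
`{V : x ∈ V}` and `{V : y ∉ V}` for `x, y ∈ F`. -/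
instance Zar.patchTopology (F : Type*) [Field F] : TopologicalSpace (Zar F) :=
  TopologicalSpace.generateFrom
    ({S | ∃ x : F, S = {V : Zar F | x ∈ V.1}} ∪ {S | ∃ y : F, S = {V : Zar F | y ∉ V.1}})

variable {F : Type*} [Field F]

/-- The maximal ideal of a valuation ring of `F`, as a subset of `F`. -/
def mIdeal (V : Zar F) : Set F := {x : F | x ∈ V.1 ∧ (x = 0 ∨ x⁻¹ ∉ V.1)}

/-- `A(X)`: the intersection of the valuation rings in `X`, as a subset of `F`. -/
def aSet (X : Set (Zar F)) : Set F := ⋂ V ∈ X, ((V : Zar F).1 : Set F)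

/-- `A(X)` as a subring of `F`. -/
def ASub (X : Set (Zar F)) : Subring F := ⨅ V ∈ X, (V : Zar F).1

/-- `J(X)`: the intersection of the maximal ideals of the valuation rings in `X`. -/
def jSet (X : Set (Zar F)) : Set F := ⋂ V ∈ X, mIdeal V

/-- The set of limit points of `X` in the patch topology of `Zar F`. -/
def limPts (X : Set (Zar F)) : Set (Zar F) :=
  {V : Zar F | ∀ U : Set (Zar F), IsOpen U → V ∈ U → ∃ W ∈ X, W ≠ V ∧ W ∈ U}


/-- A subset `A` of `F` has quotient field `F` if every element of `F` is a quotient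
of elements of `A`. -/
def HasQFSet (A : Set F) : Prop := ∀ x : F, ∃ a ∈ A, ∃ b ∈ A, b ≠ 0 ∧ x = a / b

/-! Suppose `t ∉ A` and `t⁻¹ ∉ A`, say `t ∉ V i` and `t⁻¹ ∉ V j`, and iterate
`p(a) = a² / (a² - a + 1)` from `t`. In any valuation ring `V`, `p` preserves `a ∈ 𝔪_V` and
`1 - a ∈ 𝔪_V`, and `a ∉ V` forces `1 - p(a) ∈ 𝔪_V`. Hence every iterate lies in `𝔪_{V j}`,
every iterate `s` after the first has `1 - s ∈ 𝔪_{V i}`, and each `V k` misses at most one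
iterate, since after missing one the iterates stay in `1 + 𝔪_{V k} ⊆ V k`. So some iterate
`s` lies in `A`, and neither `s` nor `1 - s` is a unit of `A`, contradicting locality. -/

def polarize {K : Type*} [Field K] (a : K) : K := a ^ 2 / (a ^ 2 - a + 1)

namespace Valuation

variable {K Γ₀ : Type*} [Field K] [LinearOrderedCommGroupWithZero Γ₀] (v : Valuation K Γ₀)
  {a : K}

lemma map_eq_one_of_map_one_sub_lt_one (h : v (1 - a) < 1) : v a = 1 := by
  simpa using v.map_one_sub_of_lt h

lemma map_sq_sub_add_one_of_lt_one (h : v a < 1) : v (a ^ 2 - a + 1) = 1 := by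
  rw [show a ^ 2 - a + 1 = 1 - a * (1 - a) by ring]
  refine v.map_one_sub_of_lt ?_
  rw [map_mul, v.map_one_sub_of_lt h, mul_one]
  exact h

lemma map_sq_sub_add_one_of_one_lt (h : 1 < v a) : v (a ^ 2 - a + 1) = v a ^ 2 := by
  have hsq : v (1 - a) < v (a ^ 2) := by
    rw [v.map_sub_swap, v.map_sub_eq_of_lt_left (by simpa using h), map_pow]
    exact lt_self_pow₀ h one_lt_two
  rw [sub_add_eq_add_sub, add_sub_assoc, v.map_add_eq_of_lt_left hsq, map_pow]

lemma map_polarize_lt_one (h : v a < 1) : v (polarize a) < 1 := by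
  rw [polarize, map_div₀, v.map_sq_sub_add_one_of_lt_one h, div_one, map_pow]
  exact pow_lt_one₀ zero_le h two_ne_zero

lemma map_one_sub_polarize (hD : v (a ^ 2 - a + 1) ≠ 0) :
    v (1 - polarize a) = v (1 - a) / v (a ^ 2 - a + 1) := by
  rw [polarize, one_sub_div ((map_ne_zero v).1 hD), map_div₀]
  ring_nf

lemma map_one_sub_polarize_lt_one (h : v (1 - a) < 1 ∨ 1 < v a) :
    v (1 - polarize a) < 1 := by
  rcases h with h | h
  · -- `a ^ 2 - a + 1` is invariant under `a ↦ 1 - a`.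
    have hD : v (a ^ 2 - a + 1) = 1 := by
      rw [← v.map_sq_sub_add_one_of_lt_one h]
      congr 1; ring
    rw [v.map_one_sub_polarize (by simp [hD]), hD, div_one]
    exact h
  · have hD := v.map_sq_sub_add_one_of_one_lt h
    have ha : v a ≠ 0 := (zero_lt_one.trans h).ne'
    rw [v.map_one_sub_polarize (by simp [hD, ha]), hD, v.map_sub_swap,
      v.map_sub_eq_of_lt_left (by simpa using h), sq, div_mul_cancel_left₀ ha]
    exact inv_lt_one_of_one_lt₀ h

lemma map_iterate_polarize_lt_one (h : v a < 1) (m : ℕ) : v (polarize^[m] a) < 1 := by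
  induction m with
  | zero => exact h
  | succ m ih => rw [Function.iterate_succ_apply']; exact v.map_polarize_lt_one ih

lemma map_one_sub_iterate_polarize_lt_one (h : v (1 - a) < 1 ∨ 1 < v a) (m : ℕ) :
    v (1 - polarize^[m + 1] a) < 1 := by
  induction m with
  | zero => exact v.map_one_sub_polarize_lt_one h
  | succ m ih =>
    rw [Function.iterate_succ_apply']
    exact v.map_one_sub_polarize_lt_one (Or.inl ih)

lemma subsingleton_one_lt_map_iterate_polarize :
    {m : ℕ | 1 < v (polarize^[m] a)}.Subsingleton := by
  intro m hm m' hm'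
  by_contra hne
  wlog hlt : m < m' generalizing m m'
  · exact this hm' hm (Ne.symm hne) (by omega)
  obtain ⟨k, rfl⟩ := Nat.exists_eq_add_of_lt hlt
  have hback := v.map_one_sub_iterate_polarize_lt_one (Or.inr hm) k
  rw [← Function.iterate_add_apply, show k + 1 + m = m + k + 1 by omega] at hback
  exact (v.map_eq_one_of_map_one_sub_lt_one hback).not_gt hm'

end Valuation

lemma ValuationSubring.exists_iterate_polarize_mem {K ι : Type*} [Field K] [Finite ι]
    (V : ι → ValuationSubring K) (a : K) : ∃ m, ∀ i, polarize^[m] a ∈ V i := by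
  have hfin : (⋃ i, {m : ℕ | 1 < (V i).valuation (polarize^[m] a)}).Finite :=
    Set.finite_iUnion fun i => ((V i).valuation.subsingleton_one_lt_map_iterate_polarize).finite
  obtain ⟨m, hm⟩ := hfin.infinite_compl.nonempty
  refine ⟨m, fun i => ?_⟩
  rw [← ValuationSubring.valuation_le_one_iff]
  simp only [mem_compl_iff, mem_iUnion, mem_ofPred_eq, not_exists, not_lt] at hm
  exact hm i

def Zar.toValuationSubring (V : Zar F) : ValuationSubring F where
  toSubring := V.1
  mem_or_inv_mem' x := by
    rcases eq_or_ne x 0 with rfl | hx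
    · exact Or.inl V.1.zero_mem
    · exact V.2 x hx

@[simp]
lemma Zar.mem_toValuationSubring {V : Zar F} {x : F} : x ∈ V.toValuationSubring ↔ x ∈ V.1 :=
  Iff.rfl

lemma ValuationSubring.valuation_eq_one_of_isUnit {K : Type*} [Field K] {A : Subring K}
    {V : ValuationSubring K} (hAV : A ≤ V.toSubring) {x : A} (hx : IsUnit x) :
    V.valuation x = 1 :=
  (V.valuation_eq_one_iff ⟨x, hAV x.2⟩).1 (hx.map (Subring.inclusion hAV))

theorem stmt18_general (n : ℕ) (V : Fin n → Zar F)
    (hloc : IsLocalRing (⨅ i, (V i).1 : Subring F)) :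
    IsValSubring F (⨅ i, (V i).1) := by
  set A : Subring F := ⨅ i, (V i).1
  set W := fun i => (V i).toValuationSubring
  have hAW : ∀ i, A ≤ (W i).toSubring := fun i => iInf_le _ i
  intro t ht
  by_contra! hnot
  obtain ⟨i₀, hi₀⟩ : ∃ i, t ∉ W i := by simpa [A, W, Subring.mem_iInf] using hnot.1
  obtain ⟨j₀, hj₀⟩ : ∃ i, t⁻¹ ∉ W i := by simpa [A, W, Subring.mem_iInf] using hnot.2
  rw [← ValuationSubring.valuation_le_one_iff, not_le] at hi₀ hj₀
  rw [map_inv₀, one_lt_inv_iff₀] at hj₀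
  obtain ⟨m, hm⟩ := ValuationSubring.exists_iterate_polarize_mem W (polarize t)
  set s := polarize^[m] (polarize t)
  have hs : s ∈ A := Subring.mem_iInf.2 hm
  have hsj : (W j₀).valuation s < 1 := by
    simpa only [Function.iterate_succ_apply] using
      (W j₀).valuation.map_iterate_polarize_lt_one hj₀.2 (m + 1)
  have hsi : (W i₀).valuation (1 - s) < 1 := by
    simpa only [Function.iterate_succ_apply] using
      (W i₀).valuation.map_one_sub_iterate_polarize_lt_one (Or.inr hi₀) m
  rcases IsLocalRing.isUnit_or_isUnit_one_sub_self (⟨s, hs⟩ : A) with hu | hu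
  · exact hsj.ne (ValuationSubring.valuation_eq_one_of_isUnit (hAW j₀) hu)
  · exact hsi.ne (ValuationSubring.valuation_eq_one_of_isUnit (hAW i₀) hu)

theorem stmt18 (n : ℕ) (V : Fin n → Zar F)
    (hqf : HasQFSet (((⨅ i, (V i).1 : Subring F) : Subring F) : Set F))
    (hloc : IsLocalRing (⨅ i, (V i).1 : Subring F)) :
    IsValSubring F (⨅ i, (V i).1) :=
  stmt18_general n V hloc
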